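/- Let ℓ be a positive integer and let 0 < δ < 2/ℓ be a real number. For a = (a_1,…,a_ℓ) ∈ {−1,1}^ℓ, define f_a : ℝ → ℝ by f_a(x) = Σ_{i=1}^ℓ a_i (√((x−i)² + δ²) − |x−i|). Then sgn(f_a(j)) = a_j for all j ∈ {1,…,ℓ}. -/
import Mathlib


/-- Let `ℓ ≥ 1` and `0 < δ < 2/ℓ`. For `a = (a_1, …, a_ℓ) ∈ {−1, 1}^ℓ`, define
`f_a(x) = Σ_{i=1}^ℓ a_i (√((x−i)² + δ²) − |x−i|)`. Then `sgn(f_a(j)) = a_j` for all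
`j ∈ {1, …, ℓ}`. (Indices are encoded by `Fin ℓ`, with `i : Fin ℓ` standing for the
integer `i + 1 ∈ {1, …, ℓ}`.) -/
theorem sign_of_radical_sum (ℓ : ℕ) (hℓ : 0 < ℓ) (δ : ℝ) (hδ0 : 0 < δ) (hδ : δ < 2 / ℓ)
    (a : Fin ℓ → ℝ) (ha : ∀ i, a i = 1 ∨ a i = -1)
    (f : ℝ → ℝ)
    (hfdef : ∀ x : ℝ, f x = ∑ i : Fin ℓ,
      a i * (Real.sqrt ((x - ((i : ℕ) + 1)) ^ 2 + δ ^ 2) - |x - ((i : ℕ) + 1)|)) :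
    ∀ j : Fin ℓ, Real.sign (f ((j : ℕ) + 1)) = a j := by
  intro j
  set x : ℝ := (j : ℕ) + 1 with hxdef
  set g : Fin ℓ → ℝ := fun i =>
    a i * (Real.sqrt ((x - ((i : ℕ) + 1)) ^ 2 + δ ^ 2) - |x - ((i : ℕ) + 1)|) with hg
  have hgj : g j = a j * δ := by
    have h0 : x - ((j : ℕ) + 1) = 0 := by simp [hxdef]
    simp only [hg, h0]
    rw [show (0:ℝ)^2 + δ^2 = δ^2 by ring, Real.sqrt_sq hδ0.le]
    simp
  have hsplit : f x = a j * δ + ∑ i ∈ Finset.univ.erase j, g i := by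
    rw [hfdef, ← Finset.add_sum_erase _ g (Finset.mem_univ j), hgj]
  have hbound : ∀ i ∈ Finset.univ.erase j, |g i| ≤ δ ^ 2 / 2 := by
    intro i hi
    have hij : i ≠ j := Finset.ne_of_mem_erase hi
    have hai : |a i| = 1 := by rcases ha i with h | h <;> simp [h]
    set d : ℝ := |x - ((i : ℕ) + 1)| with hd
    have hd1 : (1:ℝ) ≤ d := by
      have hne : ((j : ℕ) : ℤ) ≠ ((i : ℕ) : ℤ) := by
        simpa using (fun h => hij (Fin.ext h.symm))
      have h1 : (1:ℤ) ≤ |((j : ℕ) : ℤ) - ((i : ℕ) : ℤ)| :=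
        Int.one_le_abs (sub_ne_zero.mpr hne)
      have : x - ((i : ℕ) + 1) = ((((j : ℕ) : ℤ) - ((i : ℕ) : ℤ) : ℤ) : ℝ) := by
        push_cast [hxdef]; ring
      rw [hd, this, ← Int.cast_abs]
      exact_mod_cast h1
    have hsq : (x - ((i : ℕ) + 1)) ^ 2 = d ^ 2 := (sq_abs _).symm
    have hub : Real.sqrt (d ^ 2 + δ ^ 2) ≤ d + δ ^ 2 / 2 := by
      rw [show d + δ ^ 2 / 2 = Real.sqrt ((d + δ ^ 2 / 2) ^ 2) from
        (Real.sqrt_sq (by positivity)).symm]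
      apply Real.sqrt_le_sqrt
      nlinarith
    have hlb : d ≤ Real.sqrt (d ^ 2 + δ ^ 2) := by
      have h1 := Real.sqrt_le_sqrt (show d ^ 2 ≤ d ^ 2 + δ ^ 2 by nlinarith)
      rwa [Real.sqrt_sq (by linarith)] at h1
    have : |g i| = Real.sqrt (d ^ 2 + δ ^ 2) - d := by
      rw [hg]
      simp only [hsq]
      rw [abs_mul, hai, one_mul, abs_of_nonneg (by linarith)]
    rw [this]
    linarith
  have hE : |∑ i ∈ Finset.univ.erase j, g i| < δ := by
    calc |∑ i ∈ Finset.univ.erase j, g i| ≤ ∑ i ∈ Finset.univ.erase j, |g i| :=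
          Finset.abs_sum_le_sum_abs _ _
      _ ≤ (Finset.univ.erase j).card • (δ ^ 2 / 2) := Finset.sum_le_card_nsmul _ _ _ hbound
      _ < δ := by
          have hcard : (Finset.univ.erase j).card = ℓ - 1 := by
            rw [Finset.card_erase_of_mem (Finset.mem_univ j)]
            simp
          rw [hcard, nsmul_eq_mul]
          have hlt : ((ℓ - 1 : ℕ) : ℝ) < (ℓ : ℝ) := by
            exact_mod_cast Nat.sub_lt hℓ one_pos
          have hℓpos : (0:ℝ) < (ℓ : ℝ) := by exact_mod_cast hℓ
          have hδℓ : δ * ℓ < 2 := by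
            rw [div_eq_mul_inv] at hδ
            calc δ * ℓ < (2 * (ℓ:ℝ)⁻¹) * ℓ := by
                  apply mul_lt_mul_of_pos_right hδ hℓpos
              _ = 2 := by field_simp
          have hc0 : (0:ℝ) ≤ ((ℓ - 1 : ℕ) : ℝ) := Nat.cast_nonneg _
          nlinarith
  rw [hsplit]
  rcases ha j with h | h
  · rw [h]
    apply Real.sign_of_pos
    have := abs_lt.mp hE
    linarith [this.1]
  · rw [h]
    apply Real.sign_of_neg
    have := abs_lt.mp hE
    linarith [this.2]
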